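/- arXiv:1403.3019 — 3 statements merged into one kernel-verified Lean document; each statement's English description precedes it below -/
import Mathlib

section
/- Let M be a finitely generated monoid admitting a right I-structure ν based on a set S. Then S is finite, and there exists a unique binary operation ∘ on S such that (S,∘) is an RC-quasigroup and M admits the presentation with generators S and relations s(s∘t) = t(t∘s) for s ≠ t in S (so M is the structure monoid of (S,∘)); moreover the I-structure is unique and is given by ν(s₁⋯sₙ) = Πₙ(s₁,…,sₙ), and for s ≠ t the element s∘t equals the right-complement s∖t in M. -/
/-- The right-cyclic law: `(x∘y)∘(x∘z) = (y∘x)∘(y∘z)`. -/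
def RCLaw {S : Type*} (op : S → S → S) : Prop :=
  ∀ x y z : S, op (op x y) (op x z) = op (op y x) (op y z)

/-- The defining relations `s(s∘t) = t(t∘s)`, `s ≠ t`, of the structure monoid, as a relation
on the free monoid over `S`. -/
def rcRel {S : Type*} (op : S → S → S) : FreeMonoid S → FreeMonoid S → Prop :=
  fun a b => ∃ s t : S, s ≠ t ∧
    a = FreeMonoid.of s * FreeMonoid.of (op s t) ∧ b = FreeMonoid.of t * FreeMonoid.of (op t s)

/-- The structure monoid of `(S,∘)`: the monoid presented by generators `S` and relations
`s(s∘t) = t(t∘s)` for `s ≠ t`, realized as the quotient of the free monoid on `S` by the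
congruence generated by these relations. -/
abbrev StructureMonoid {S : Type*} (op : S → S → S) := (conGen (rcRel op)).Quotient

/-- The canonical generator of the structure monoid associated with `s ∈ S`. -/
def smGen {S : Type*} (op : S → S → S) (s : S) : StructureMonoid op :=
  (conGen (rcRel op)).mk' (FreeMonoid.of s)

/-- The monomials `Ωₙ`: `OmegaFin op n x` is `Ω_{n+1}(x₀,…,xₙ)`, defined by `Ω₁(x₁) = x₁` and
`Ωₙ(x₁,…,xₙ) = Ω_{n−1}(x₁,…,x_{n−1}) ∘ Ω_{n−1}(x₁,…,x_{n−2},xₙ)`. -/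
def OmegaFin {S : Type*} (op : S → S → S) : (n : ℕ) → (Fin (n + 1) → S) → S
  | 0, x => x 0
  | n + 1, x =>
      op (OmegaFin op n fun i => x i.castSucc)
         (OmegaFin op n fun i => if (i : ℕ) = n then x (Fin.last (n + 1)) else x i.castSucc)

/-- `Πₙ(x₁,…,xₙ) = ι(Ω₁(x₁))·ι(Ω₂(x₁,x₂))·…·ι(Ωₙ(x₁,…,xₙ))`, computed in the monoid `M`. -/
def PiFin {S M : Type*} [Monoid M] (op : S → S → S) (ι : S → M) (n : ℕ) (x : Fin n → S) : M :=
  ((List.finRange n).map fun i =>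
    ι (OmegaFin op i.val fun j : Fin (i.val + 1) => x (Fin.castLE i.isLt j))).prod

/-!
Right multiplication by a generator acts on `ℕ^(S)` through a permutation:
`ν a * s = ν (a + e (π_a s))`. The elements of `S` have degree one, so they lie in every generating
set and `S` is finite, which makes `π_a` bijective. Put `s ∘ t = π_{e s}⁻¹ t`, so that
`s (s ∘ t) = ν (e s + e t) = t (t ∘ s)`. Computing `ν b * s (s ∘ t)` in two ways gives
`π_{b + e (π_b u)} (u ∘ v) = π_b v`, which yields the right-cyclic law, the formula `ν = Π` and,
since `Π` only depends on `∘`, the uniqueness of `ν`. Divisibility in `M` is the componentwise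
order of `ℕ^(S)`, so `ν (e s + e t)` is the right-lcm of `s` and `t`. Finally, two words with the
same image in `M` are related by the defining relations: an exchange argument moves the first
letter of one word to the front of the other.
-/

open Finsupp Function

theorem Finsupp.induction_add_single_one {α : Type*} {motive : (α →₀ ℕ) → Prop} (a : α →₀ ℕ)
    (zero : motive 0) (add_single : ∀ a u, motive a → motive (a + single u 1)) : motive a := by
  classical
  obtain ⟨m, rfl⟩ := Multiset.toFinsupp.surjective a
  induction m using Multiset.induction_on with
  | empty => simpa using zero
  | cons u m ih => simpa [← Multiset.singleton_add, add_comm] using add_single _ u ih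

theorem Finsupp.exists_list_sum_eq {α : Type*} (a : α →₀ ℕ) :
    ∃ l : List α, (l.map fun u => single u 1).sum = a := by
  induction a using Finsupp.induction_add_single_one with
  | zero => exact ⟨[], rfl⟩
  | add_single a u ih =>
    obtain ⟨l, rfl⟩ := ih
    exact ⟨l ++ [u], by simp⟩

theorem Finsupp.eq_of_single_add_single_eq {α : Type*} {x y z w : α}
    (h : single x 1 + single y (1 : ℕ) = single z 1 + single w 1) (hxz : x ≠ z) : y = z := by
  rcases (single_add_single_eq_single_add_single one_ne_zero one_ne_zero).1 h with
    ⟨hxz', -⟩ | ⟨-, -, hyz⟩ | ⟨h0, -⟩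
  · exact absurd hxz' hxz
  · exact hyz
  · simp at h0

theorem Set.EqOn.eq_of_compl_singleton {α β : Type*} {f g : α → β} {u : α}
    (h : Set.EqOn f g {u}ᶜ) (hf : Surjective f) (hg : Injective g) : f = g := by
  funext v
  by_cases hvu : v = u
  · subst hvu
    obtain ⟨w, hw⟩ := hf (g v)
    by_cases hwv : w = v
    · rwa [hwv] at hw
    · exact absurd (hg ((h hwv).symm.trans hw)) hwv
  · exact h hvu

theorem PiFin_succ {S M : Type*} [Monoid M] (op : S → S → S) (ι : S → M) (n : ℕ)
    (x : Fin (n + 1) → S) :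
    PiFin op ι (n + 1) x = PiFin op ι n (fun i => x i.castSucc) * ι (OmegaFin op n x) := by
  simp only [PiFin, ← List.ofFn_eq_map, List.ofFn_succ', List.prod_concat]
  rfl

theorem smGen_mul_smGen {S : Type*} (op : S → S → S) {s t : S} (hst : s ≠ t) :
    smGen op s * smGen op (op s t) = smGen op t * smGen op (op t s) := by
  simp only [smGen, ← map_mul]
  exact (Con.eq _).2 (ConGen.Rel.of _ _ ⟨s, t, hst, rfl, rfl⟩)

structure IStructure (M : Type*) [Monoid M] (S : Set M) where
  toFun : (S →₀ ℕ) → M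
  bijective : Bijective toFun
  map_zero : toFun 0 = 1
  map_single : ∀ s : S, toFun (single s 1) = s
  range_add_single : ∀ a : S →₀ ℕ,
    Set.range (fun s : S => toFun (a + single s 1)) = Set.range fun s : S => toFun a * s

namespace IStructure

variable {M : Type*} [Monoid M] {S : Set M}

instance : CoeFun (IStructure M S) fun _ => (S →₀ ℕ) → M := ⟨toFun⟩

section

variable (ν : IStructure M S)

theorem injective : Injective ν := ν.bijective.1

theorem exists_mul_eq (a : S →₀ ℕ) (s : S) : ∃ u, ν a * s = ν (a + single u 1) := by
  obtain ⟨u, hu⟩ := (ν.range_add_single a).ge ⟨s, rfl⟩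
  exact ⟨u, hu.symm⟩

theorem exists_add_single_eq (a : S →₀ ℕ) (u : S) : ∃ s : S, ν (a + single u 1) = ν a * s := by
  obtain ⟨s, hs⟩ := (ν.range_add_single a).le ⟨u, rfl⟩
  exact ⟨s, hs.symm⟩

theorem add_single_inj {a : S →₀ ℕ} {u u' : S} :
    ν (a + single u 1) = ν (a + single u' 1) ↔ u = u' := by
  rw [ν.injective.eq_iff, add_right_inj, single_left_inj one_ne_zero]

theorem exists_mul_eq_add (a c : S →₀ ℕ) : ∃ d, degree d = degree c ∧ ν a * ν c = ν (a + d) := by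
  induction c using Finsupp.induction_add_single_one with
  | zero => exact ⟨0, rfl, by rw [ν.map_zero, mul_one, add_zero]⟩
  | add_single c u ih =>
    obtain ⟨d, hd, hmul⟩ := ih
    obtain ⟨s, hs⟩ := ν.exists_add_single_eq c u
    obtain ⟨w, hw⟩ := ν.exists_mul_eq (a + d) s
    refine ⟨d + single w 1, by simp [hd], ?_⟩
    rw [hs, ← mul_assoc, hmul, hw, add_assoc]

theorem dvd_add (a c : S →₀ ℕ) : ν a ∣ ν (a + c) := by
  induction c using Finsupp.induction_add_single_one with
  | zero => rw [add_zero]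
  | add_single c u ih =>
    obtain ⟨s, hs⟩ := ν.exists_add_single_eq (a + c) u
    rw [← add_assoc, hs]
    exact ih.mul_right _

theorem dvd_iff_le {a b : S →₀ ℕ} : ν a ∣ ν b ↔ a ≤ b := by
  refine ⟨fun ⟨x, hx⟩ => ?_, fun hab => ?_⟩
  · obtain ⟨c, rfl⟩ := ν.bijective.2 x
    obtain ⟨d, -, hd⟩ := ν.exists_mul_eq_add a c
    rw [ν.injective (hx.trans hd)]
    exact le_self_add
  · obtain ⟨c, rfl⟩ := exists_add_of_le hab
    exact ν.dvd_add a c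

end

theorem one_notMem (ν : IStructure M S) : (1 : M) ∉ S := fun h => by
  have h1 : ν (single ⟨1, h⟩ 1) = ν 0 := (ν.map_single ⟨1, h⟩).trans ν.map_zero.symm
  exact single_ne_zero.2 one_ne_zero (ν.injective h1)

theorem eq_one_or_eq_one_of_mul_mem (ν : IStructure M S) {x y : M} (h : x * y ∈ S) :
    x = 1 ∨ y = 1 := by
  obtain ⟨a, rfl⟩ := ν.bijective.2 x
  obtain ⟨c, rfl⟩ := ν.bijective.2 y
  obtain ⟨d, hdeg, hd⟩ := ν.exists_mul_eq_add a c
  have hsum : a + d = single ⟨_, h⟩ 1 := ν.injective (by rw [← hd, ν.map_single])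
  have hdeg1 := congrArg degree hsum
  rw [map_add, degree_single, hdeg] at hdeg1
  rcases Nat.add_eq_one_iff.1 hdeg1 with ⟨ha, -⟩ | ⟨-, hc⟩
  · left; rw [(degree_eq_zero_iff a).1 ha, ν.map_zero]
  · right; rw [(degree_eq_zero_iff c).1 hc, ν.map_zero]

theorem prod_mem_list_of_prod_mem (ν : IStructure M S) {l : List M} (h : l.prod ∈ S) :
    l.prod ∈ l := by
  induction l with
  | nil => exact absurd h ν.one_notMem
  | cons x r ih =>
    rw [List.prod_cons] at h ⊢
    rcases ν.eq_one_or_eq_one_of_mul_mem h with rfl | hr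
    · rw [one_mul] at h ⊢
      exact List.mem_cons_of_mem _ (ih h)
    · rw [hr, mul_one]
      exact List.mem_cons_self

theorem finite (ν : IStructure M S) [Monoid.FG M] : S.Finite := by
  obtain ⟨T, hT⟩ := Monoid.FG.fg_top (M := M)
  refine T.finite_toSet.subset fun s hs => ?_
  obtain ⟨l, hl, rfl⟩ := Submonoid.exists_list_of_mem_closure (s := (T : Set M))
    (hT ▸ Submonoid.mem_top s)
  exact hl _ (ν.prod_mem_list_of_prod_mem hs)

theorem closure_eq_top (ν : IStructure M S) : Submonoid.closure S = ⊤ := by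
  rw [eq_top_iff]
  rintro x -
  obtain ⟨a, rfl⟩ := ν.bijective.2 x
  induction a using Finsupp.induction_add_single_one with
  | zero => exact ν.map_zero ▸ one_mem _
  | add_single a u ih =>
    obtain ⟨s, hs⟩ := ν.exists_add_single_eq a u
    exact hs ▸ mul_mem ih (Submonoid.subset_closure s.2)

section Finite

variable (ν : IStructure M S) [Finite S]

noncomputable def perm (a : S →₀ ℕ) : Equiv.Perm S :=
  Equiv.ofBijective (fun s => (ν.exists_mul_eq a s).choose) <| by
    have hsurj : Surjective fun s => (ν.exists_mul_eq a s).choose := fun u => by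
      obtain ⟨s, hs⟩ := ν.exists_add_single_eq a u
      exact ⟨s, ν.add_single_inj.1 ((ν.exists_mul_eq a s).choose_spec.symm.trans hs.symm)⟩
    exact ⟨Finite.injective_iff_surjective.2 hsurj, hsurj⟩

theorem mul_eq_perm (a : S →₀ ℕ) (s : S) : ν a * s = ν (a + single (ν.perm a s) 1) :=
  (ν.exists_mul_eq a s).choose_spec

theorem add_single_eq_mul (a : S →₀ ℕ) (u : S) :
    ν (a + single u 1) = ν a * ((ν.perm a).symm u) := by
  rw [mul_eq_perm, Equiv.apply_symm_apply]

theorem perm_zero : ν.perm 0 = Equiv.refl S :=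
  Equiv.ext fun s => (ν.add_single_inj (u' := s)).1 <| (ν.mul_eq_perm 0 s).symm.trans <| by
    rw [ν.map_zero, one_mul, zero_add, ν.map_single]

noncomputable def op (s t : S) : S := (ν.perm (single s 1)).symm t

theorem perm_op (s t : S) : ν.perm (single s 1) (ν.op s t) = t := Equiv.apply_symm_apply _ _

theorem op_bijective (s : S) : Bijective (ν.op s) := (ν.perm _).symm.bijective

theorem mul_op (s t : S) : (s : M) * ν.op s t = ν (single s 1 + single t 1) := by
  rw [← ν.map_single s, op, ← add_single_eq_mul]

theorem mul_op_comm (s t : S) : (s : M) * ν.op s t = t * ν.op t s := by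
  rw [mul_op, mul_op, add_comm]

theorem perm_add_single_perm_op (b : S →₀ ℕ) (u v : S) :
    ν.perm (b + single (ν.perm b u) 1) (ν.op u v) = ν.perm b v := by
  refine congrFun (Set.EqOn.eq_of_compl_singleton (u := u) (fun v (hvu : v ≠ u) => ?_)
    ((ν.perm _).surjective.comp (ν.op_bijective u).2) (ν.perm b).injective) v
  -- `ν b * (u * (u ∘ v)) = ν b * (v * (v ∘ u))` adds the same two unit vectors to `b`.
  have h := congrArg (ν b * ·) (ν.mul_op_comm u v)
  simp only [← mul_assoc, mul_eq_perm] at h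
  rw [add_assoc, add_assoc, ν.injective.eq_iff, add_right_inj] at h
  exact eq_of_single_add_single_eq h ((ν.perm b).injective.ne hvu.symm)

theorem op_op (x y z : S) :
    ν.op (ν.op x y) (ν.op x z) = (ν.perm (single x 1 + single y 1)).symm z := by
  have h := ν.perm_add_single_perm_op (single x 1) (ν.op x y) (ν.op x z)
  rwa [perm_op, perm_op, ← Equiv.eq_symm_apply] at h

theorem rcLaw : RCLaw ν.op := fun x y z => by rw [op_op, op_op, add_comm]

theorem omegaFin_eq (n : ℕ) (x : Fin (n + 1) → S) :
    OmegaFin ν.op n x = (ν.perm (∑ i : Fin n, single (x i.castSucc) 1)).symm (x (Fin.last n)) := by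
  induction n with
  | zero => simp [OmegaFin, perm_zero]
  | succ n ih =>
    have hif (i : Fin n) : (if (i.castSucc : ℕ) = n then x (Fin.last (n + 1))
        else x i.castSucc.castSucc) = x i.castSucc.castSucc := if_neg i.isLt.ne
    rw [OmegaFin, ih, ih, Equiv.eq_symm_apply, Fin.sum_univ_castSucc]
    simp only [hif, Fin.val_last, if_true]
    set b := ∑ i : Fin n, single (x i.castSucc.castSucc) 1
    simpa only [Equiv.apply_symm_apply] using ν.perm_add_single_perm_op b
      ((ν.perm b).symm (x (Fin.last n).castSucc)) ((ν.perm b).symm (x (Fin.last (n + 1))))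

theorem apply_sum_single_eq_piFin (n : ℕ) (x : Fin n → S) :
    ν (∑ i, single (x i) 1) = PiFin ν.op (↑) n x := by
  induction n with
  | zero => simp [PiFin, ν.map_zero]
  | succ n ih => rw [Fin.sum_univ_castSucc, add_single_eq_mul, PiFin_succ, ih, omegaFin_eq]

theorem apply_list_sum_eq_piFin (l : List S) :
    ν (l.map fun s => single s 1).sum = PiFin ν.op (↑) l.length l.get := by
  conv_lhs => rw [← List.ofFn_get l, List.map_ofFn, List.sum_ofFn]
  exact ν.apply_sum_single_eq_piFin _ _

theorem op_eq_of_mul_comm (op' : S → S → S) (hinj : ∀ s, Injective (op' s))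
    (hcomm : ∀ s t : S, s ≠ t → (s : M) * op' s t = t * op' t s) : op' = ν.op := by
  funext s
  refine (Set.EqOn.eq_of_compl_singleton (u := s) (fun t (hts : t ≠ s) => ?_)
    (ν.op_bijective s).2 (hinj s)).symm
  have h := hcomm s t hts.symm
  rw [← ν.map_single s, ← ν.map_single t, mul_eq_perm, mul_eq_perm, ν.injective.eq_iff] at h
  rw [op, Equiv.symm_apply_eq, eq_of_single_add_single_eq h hts.symm]

instance : Subsingleton (IStructure M S) where
  allEq ν' ν := by
    have hop : ν'.op = ν.op :=
      ν.op_eq_of_mul_comm ν'.op (fun s => (ν'.op_bijective s).1) fun s t _ => ν'.mul_op_comm s t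
    have hcoe : (ν' : (S →₀ ℕ) → M) = ν := funext fun a => by
      obtain ⟨l, rfl⟩ := a.exists_list_sum_eq
      rw [apply_list_sum_eq_piFin, apply_list_sum_eq_piFin, hop]
    cases ν
    cases ν'
    congr

theorem mul_op_dvd {s t : S} (hst : s ≠ t) {k : M} (hs : (s : M) ∣ k) (ht : (t : M) ∣ k) :
    (s : M) * ν.op s t ∣ k := by
  obtain ⟨b, rfl⟩ := ν.bijective.2 k
  rw [← ν.map_single s, ν.dvd_iff_le] at hs
  rw [← ν.map_single t, ν.dvd_iff_le] at ht
  rw [mul_op, ν.dvd_iff_le]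
  intro v
  by_cases hsv : s = v
  · subst hsv
    simpa [single_eq_of_ne' hst.symm] using hs s
  · simpa [single_eq_of_ne' hsv] using ht v

noncomputable def rightMul (a : S →₀ ℕ) (l : List S) : S →₀ ℕ :=
  l.foldl (fun b s => b + single (ν.perm b s) 1) a

theorem rightMul_cons (a : S →₀ ℕ) (s : S) (l : List S) :
    ν.rightMul a (s :: l) = ν.rightMul (a + single (ν.perm a s) 1) l := rfl

theorem apply_rightMul (l : List S) (a : S →₀ ℕ) :
    ν (ν.rightMul a l) = ν a * (l.map (↑)).prod := by
  induction l generalizing a with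
  | nil => simp [rightMul]
  | cons s l ih => rw [rightMul_cons, ih, ← mul_eq_perm, List.map_cons, List.prod_cons, mul_assoc]

theorem le_rightMul (l : List S) (a : S →₀ ℕ) : a ≤ ν.rightMul a l := by
  induction l generalizing a with
  | nil => exact le_rfl
  | cons s l ih => exact le_self_add.trans (ih _)

theorem degree_rightMul (l : List S) (a : S →₀ ℕ) :
    degree (ν.rightMul a l) = degree a + l.length := by
  induction l generalizing a with
  | nil => rfl
  | cons s l ih =>
    rw [rightMul_cons, ih, map_add, degree_single, List.length_cons, add_assoc, add_comm 1]

theorem conGen_le_ker : conGen (rcRel ν.op) ≤ Con.ker (FreeMonoid.lift ((↑) : S → M)) := by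
  refine Con.conGen_le.2 ?_
  rintro _ _ ⟨s, t, -, rfl, rfl⟩
  simpa [Con.ker_rel] using ν.mul_op_comm s t

theorem rightMul_eq_of_rel {l l' : List S}
    (h : conGen (rcRel ν.op) (FreeMonoid.ofList l) (FreeMonoid.ofList l')) (a : S →₀ ℕ) :
    ν.rightMul a l = ν.rightMul a l' := by
  apply ν.injective
  have h' := ν.conGen_le_ker h
  rw [Con.ker_rel, FreeMonoid.lift_ofList, FreeMonoid.lift_ofList] at h'
  rw [apply_rightMul, apply_rightMul, h']

/-- Exchange lemma: a word that raises the coordinate which `t` would raise can be rewritten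
to begin with `t`. -/
theorem exists_rel_cons_of_lt (l : List S) (a : S →₀ ℕ) (t : S)
    (h : a (ν.perm a t) < ν.rightMul a l (ν.perm a t)) :
    ∃ l', conGen (rcRel ν.op) (FreeMonoid.ofList l) (FreeMonoid.ofList (t :: l')) := by
  set c := conGen (rcRel ν.op)
  induction l generalizing a t with
  | nil => exact absurd h (lt_irrefl _)
  | cons t' r ih =>
    by_cases htt : t' = t
    · exact ⟨r, htt ▸ c.refl _⟩
    have hne : ν.perm a t' ≠ ν.perm a t := (ν.perm a).injective.ne htt
    obtain ⟨r', hr'⟩ := ih (a + single (ν.perm a t') 1) (ν.op t' t) (by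
      rwa [perm_add_single_perm_op, coe_add, Pi.add_apply, single_eq_of_ne' hne, add_zero])
    refine ⟨ν.op t t' :: r', ?_⟩
    have hswap : c (.of t' * .of (ν.op t' t)) (.of t * .of (ν.op t t')) :=
      ConGen.Rel.of _ _ ⟨t', t, htt, rfl, rfl⟩
    have h1 := c.mul (c.refl (.of t')) hr'
    simp only [FreeMonoid.ofList_cons, ← mul_assoc] at h1 ⊢
    exact h1.trans (c.mul hswap (c.refl _))

theorem rel_of_rightMul_eq (l : List S) {l' : List S} {a : S →₀ ℕ}
    (h : ν.rightMul a l = ν.rightMul a l') :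
    conGen (rcRel ν.op) (FreeMonoid.ofList l) (FreeMonoid.ofList l') := by
  set c := conGen (rcRel ν.op)
  induction l generalizing a l' with
  | nil =>
    have hlen := congrArg degree h
    rw [degree_rightMul, degree_rightMul] at hlen
    obtain rfl : l' = [] := List.eq_nil_of_length_eq_zero (by simpa using hlen.symm)
    exact c.refl _
  | cons t r ih =>
    obtain ⟨r', hr'⟩ := ν.exists_rel_cons_of_lt l' a t (by
      rw [← h, rightMul_cons]
      exact lt_of_lt_of_le (by simp) (ν.le_rightMul r _ (ν.perm a t)))
    have h' : ν.rightMul (a + single (ν.perm a t) 1) r =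
        ν.rightMul (a + single (ν.perm a t) 1) r' := by
      rw [← rightMul_cons, ← rightMul_cons, h, ν.rightMul_eq_of_rel hr']
    exact (c.mul (c.refl (.of t)) (ih h')).trans (c.symm hr')

theorem exists_structureMonoid_mulEquiv :
    ∃ e : StructureMonoid ν.op ≃* M, ∀ s : S, e (smGen ν.op s) = s := by
  set c := conGen (rcRel ν.op)
  have hinj : Injective (c.lift (FreeMonoid.lift ((↑) : S → M)) ν.conGen_le_ker) := by
    intro x y hxy
    obtain ⟨w, rfl⟩ := c.mk'_surjective x
    obtain ⟨w', rfl⟩ := c.mk'_surjective y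
    refine (c.eq).2 ?_
    refine ν.rel_of_rightMul_eq w.toList (l' := w'.toList) (a := 0) (ν.injective ?_)
    rw [apply_rightMul, apply_rightMul, ← FreeMonoid.lift_apply, ← FreeMonoid.lift_apply]
    simpa [Con.lift_mk'] using congrArg (ν 0 * ·) hxy
  have hsurj : Surjective (c.lift (FreeMonoid.lift ((↑) : S → M)) ν.conGen_le_ker) :=
    Con.lift_surjective_of_surjective _ <| by
      rw [← MonoidHom.mrange_eq_top, ← Submonoid.closure_eq_mrange, ν.closure_eq_top]
  exact ⟨MulEquiv.ofBijective _ ⟨hinj, hsurj⟩, fun s => FreeMonoid.lift_eval_of ((↑) : S → M) s⟩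

end Finite

end IStructure

theorem statement14_general {M : Type*} [Monoid M] [Monoid.FG M] (S : Set M)
    (ν : (↥S →₀ ℕ) → M)
    (hbij : Function.Bijective ν)
    (hν0 : ν 0 = 1)
    (hνS : ∀ s : ↥S, ν (Finsupp.single s 1) = (s : M))
    (hI : ∀ a : ↥S →₀ ℕ,
      Set.range (fun s : ↥S => ν (a + Finsupp.single s 1)) =
        Set.range fun s : ↥S => ν a * (s : M)) :
    S.Finite ∧
    ∃ op : ↥S → ↥S → ↥S,
      (RCLaw op ∧ ∀ s : ↥S, Function.Bijective (op s)) ∧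
      (∃ e : StructureMonoid op ≃* M, ∀ s : ↥S, e (smGen op s) = (s : M)) ∧
      (∀ op' : ↥S → ↥S → ↥S,
        (RCLaw op' ∧ ∀ s : ↥S, Function.Bijective (op' s)) →
        (∃ e : StructureMonoid op' ≃* M, ∀ s : ↥S, e (smGen op' s) = (s : M)) →
        op' = op) ∧
      (∀ ν' : (↥S →₀ ℕ) → M,
        Function.Bijective ν' → ν' 0 = 1 → (∀ s : ↥S, ν' (Finsupp.single s 1) = (s : M)) →
        (∀ a : ↥S →₀ ℕ,
          Set.range (fun s : ↥S => ν' (a + Finsupp.single s 1)) =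
            Set.range fun s : ↥S => ν' a * (s : M)) →
        ν' = ν) ∧
      (∀ l : List ↥S,
        ν ((l.map fun s => Finsupp.single s 1).sum) =
          PiFin op (fun s : ↥S => (s : M)) l.length l.get) ∧
      (∀ s t : ↥S, s ≠ t →
        ((s : M) ∣ (s : M) * (op s t : M)) ∧
        ((t : M) ∣ (s : M) * (op s t : M)) ∧
        (∀ k : M, (s : M) ∣ k → (t : M) ∣ k → (s : M) * (op s t : M) ∣ k)) := by
  let I : IStructure M S := ⟨ν, hbij, hν0, hνS, hI⟩
  have : Finite S := I.finite.to_subtype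
  refine ⟨I.finite, I.op, ⟨I.rcLaw, I.op_bijective⟩, I.exists_structureMonoid_mulEquiv, ?_, ?_,
    I.apply_list_sum_eq_piFin, fun s t hst => ?_⟩
  · rintro op' ⟨-, hbij'⟩ ⟨e, he⟩
    refine I.op_eq_of_mul_comm op' (fun s => (hbij' s).1) fun s t hst => ?_
    simpa only [map_mul, he] using congrArg e (smGen_mul_smGen op' hst)
  · intro ν' hbij' hν0' hνS' hI'
    let I' : IStructure M S := ⟨ν', hbij', hν0', hνS', hI'⟩
    exact congrArg IStructure.toFun (Subsingleton.elim I' I)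
  · exact ⟨dvd_mul_right _ _, I.mul_op_comm s t ▸ dvd_mul_right _ _, fun k => I.mul_op_dvd hst⟩

/-- If `M` is a finitely generated monoid with a right `I`-structure `ν`
based on `S ⊆ M`, then `S` is finite and there is a unique binary operation `∘` on `S` making
`(S,∘)` an RC-quasigroup with `M` (isomorphic to) its structure monoid; moreover the
`I`-structure is unique and given by `ν(s₁⋯sₙ) = Πₙ(s₁,…,sₙ)`, and for `s ≠ t` the element
`s·(s∘t)` is the right-lcm of `s` and `t` in `M` (i.e. `s∘t` is the right-complement `s∖t`). -/
theorem statement14 {M : Type*} [Monoid M] [Monoid.FG M] (S : Set M)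
    (hgen : Submonoid.closure S = ⊤)
    (ν : (↥S →₀ ℕ) → M)
    (hbij : Function.Bijective ν)
    (hν0 : ν 0 = 1)
    (hνS : ∀ s : ↥S, ν (Finsupp.single s 1) = (s : M))
    (hI : ∀ a : ↥S →₀ ℕ,
      Set.range (fun s : ↥S => ν (a + Finsupp.single s 1)) =
        Set.range fun s : ↥S => ν a * (s : M)) :
    S.Finite ∧
    ∃ op : ↥S → ↥S → ↥S,
      (RCLaw op ∧ ∀ s : ↥S, Function.Bijective (op s)) ∧
      (∃ e : StructureMonoid op ≃* M, ∀ s : ↥S, e (smGen op s) = (s : M)) ∧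
      (∀ op' : ↥S → ↥S → ↥S,
        (RCLaw op' ∧ ∀ s : ↥S, Function.Bijective (op' s)) →
        (∃ e : StructureMonoid op' ≃* M, ∀ s : ↥S, e (smGen op' s) = (s : M)) →
        op' = op) ∧
      (∀ ν' : (↥S →₀ ℕ) → M,
        Function.Bijective ν' → ν' 0 = 1 → (∀ s : ↥S, ν' (Finsupp.single s 1) = (s : M)) →
        (∀ a : ↥S →₀ ℕ,
          Set.range (fun s : ↥S => ν' (a + Finsupp.single s 1)) =
            Set.range fun s : ↥S => ν' a * (s : M)) →
        ν' = ν) ∧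
      (∀ l : List ↥S,
        ν ((l.map fun s => Finsupp.single s 1).sum) =
          PiFin op (fun s : ↥S => (s : M)) l.length l.get) ∧
      (∀ s t : ↥S, s ≠ t →
        ((s : M) ∣ (s : M) * (op s t : M)) ∧
        ((t : M) ∣ (s : M) * (op s t : M)) ∧
        (∀ k : M, (s : M) ∣ k → (t : M) ∣ k → (s : M) * (op s t : M) ∣ k)) :=
  statement14_general S ν hbij hν0 hνS hI
end

section
/- Let (S,∘) be an RC-quasigroup of class d, M its structure monoid, ν : ℕ^(S) → M the right I-structure given by ν(s₁⋯s_q) = Π_q(s₁,…,s_q), and for s in S set s^[d] = Π_d(s,…,s). Then ν(s^d·a) = s^[d]·ν(a) holds for every s in S and every a in ℕ^(S); in particular the permutation ψ(s^d) of S determined by ν(s^d t) = ν(s^d)·ψ(s^d)(t) is the identity, and for all s,t in S the elements s^[d] and t^[d] commute in M. -/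
section Aux
variable {S M : Type*} [Monoid M] (op : S → S → S) (ι : S → M)

lemma omegaFin_congr {n : ℕ} {x y : Fin (n+1) → S} (h : ∀ i, x i = y i) :
    OmegaFin op n x = OmegaFin op n y := congrArg _ (funext h)

lemma piFin_succ (n : ℕ) (x : Fin (n+1) → S) :
    PiFin op ι (n+1) x = PiFin op ι n (fun i => x i.castSucc) * ι (OmegaFin op n x) := by
  simp only [PiFin, List.finRange_succ_last, List.map_append, List.prod_append, List.map_map,
    List.map_cons, List.map_nil, List.prod_cons, List.prod_nil, mul_one]
  rfl

lemma omega_shift {d : ℕ} (s : S)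
    (hc : ∀ t : S, OmegaFin op d (Fin.snoc (fun _ : Fin d => s) t) = t) :
    ∀ (n : ℕ) (g : Fin (d + n + 1) → S), (∀ i : Fin (d + n + 1), (i : ℕ) < d → g i = s) →
      OmegaFin op (d + n) g = OmegaFin op n (fun j : Fin (n+1) => g (Fin.natAdd d j)) := by
  intro n
  induction n with
  | zero =>
      intro g hg
      have hgs : g = Fin.snoc (fun _ : Fin d => s) (g (Fin.last d)) := by
        funext i
        induction i using Fin.lastCases with
        | last => simp
        | cast j => simp [hg j.castSucc j.isLt]
      have h2 : OmegaFin op 0 (fun j : Fin 1 => g (Fin.natAdd d j)) = g (Fin.last d) := by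
        show g (Fin.natAdd d 0) = g (Fin.last d)
        exact congrArg g (Fin.ext (by simp))
      rw [h2]
      conv_lhs => rw [hgs]
      exact hc _
  | succ n ih =>
      intro n_g hg
      have g : Fin (d + n + 1 + 1) → S := n_g
      show OmegaFin op ((d+n)+1) n_g = OmegaFin op (n+1) (fun j : Fin (n+2) => n_g (Fin.natAdd d j))
      rw [OmegaFin, OmegaFin]
      congr 1
      · rw [ih (fun i => n_g i.castSucc) (fun i h => hg i.castSucc h)]
        exact omegaFin_congr op fun j => congrArg n_g (Fin.ext rfl)
      · rw [ih (fun i => if (i : ℕ) = d + n then n_g (Fin.last (d+n+1)) else n_g i.castSucc)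
          (fun i h => by
            show (if (i : ℕ) = d + n then n_g (Fin.last (d+n+1)) else n_g i.castSucc) = s
            rw [if_neg (by omega)]
            exact hg i.castSucc h)]
        apply omegaFin_congr op
        intro j
        show (if ((Fin.natAdd d j : Fin (d+n+1)) : ℕ) = d + n then _ else _) = _
        simp only [Fin.coe_natAdd]
        by_cases h : (j : ℕ) = n
        · rw [if_pos (by omega), if_pos h]
          exact congrArg n_g (Fin.ext (by simp [Fin.last]; omega))
        · rw [if_neg (by omega), if_neg h]
          exact congrArg n_g (Fin.ext rfl)

lemma piFin_zero (x : Fin 0 → S) : PiFin op ι 0 x = 1 := rfl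

lemma piFin_split {d : ℕ} (s : S)
    (hc : ∀ t : S, OmegaFin op d (Fin.snoc (fun _ : Fin d => s) t) = t) :
    ∀ (n : ℕ) (g : Fin (d + n) → S), (∀ i : Fin (d + n), (i : ℕ) < d → g i = s) →
      PiFin op ι (d + n) g =
        PiFin op ι d (fun _ => s) * PiFin op ι n (fun j => g (Fin.natAdd d j)) := by
  intro n
  induction n with
  | zero =>
      intro g hg
      have : g = fun _ : Fin d => s := funext fun i => hg i i.isLt
      rw [piFin_zero, mul_one]
      exact congrArg _ this
  | succ n ih =>
      intro g hg
      show PiFin op ι ((d+n)+1) g =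
        PiFin op ι d (fun _ => s) * PiFin op ι (n+1) (fun j : Fin (n+1) => g (Fin.natAdd d j))
      rw [piFin_succ, ih (fun i => g i.castSucc) (fun i h => hg i.castSucc h),
        omega_shift op s hc n g hg, piFin_succ, mul_assoc]
      congr 2

lemma piFin_congr {n m : ℕ} (h : n = m) (x : Fin n → S) :
    PiFin op ι n x = PiFin op ι m (fun i => x (Fin.cast h.symm i)) := by
  subst h; rfl

end Aux


/-- Let `(S,∘)` be an RC-quasigroup of class `d`, `M` its structure monoid,
`ν : ℕ^(S) → M` the right `I`-structure `ν(s₁⋯s_q) = Π_q(s₁,…,s_q)`, and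
`s^[d] = Π_d(s,…,s)`. Then `ν(s^d·a) = s^[d]·ν(a)` for all `s ∈ S` and `a ∈ ℕ^(S)`; in
particular the permutation `ψ(s^d)` is the identity, and the elements `s^[d]`, `t^[d]`
commute in `M`. -/
theorem statement16 {S : Type*} (op : S → S → S) {d : ℕ}
    (hRC : RCLaw op) (hlb : ∀ s : S, Function.Bijective (op s))
    (hclass : ∀ s t : S, OmegaFin op d (Fin.snoc (fun _ : Fin d => s) t) = t)
    (ν : (S →₀ ℕ) → StructureMonoid op)
    (hν : ∀ l : List S,
      ν ((l.map fun s => Finsupp.single s 1).sum) = PiFin op (smGen op) l.length l.get) :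
    (∀ (s : S) (a : S →₀ ℕ),
      ν (Finsupp.single s d + a) = PiFin op (smGen op) d (fun _ => s) * ν a) ∧
    (∀ s t : S,
      ν (Finsupp.single s d + Finsupp.single t 1) = ν (Finsupp.single s d) * smGen op t) ∧
    (∀ s t : S,
      PiFin op (smGen op) d (fun _ => s) * PiFin op (smGen op) d (fun _ => t) =
        PiFin op (smGen op) d (fun _ => t) * PiFin op (smGen op) d (fun _ => s)) := by
  classical
  have hrep : ∀ (s : S) (k : ℕ),
      ((List.replicate k s).map fun t => Finsupp.single t (1:ℕ)).sum = Finsupp.single s k := by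
    intro s k
    rw [List.map_replicate, List.sum_replicate, Finsupp.smul_single, smul_eq_mul, mul_one]
  have hex : ∀ a : S →₀ ℕ, ∃ l : List S, (l.map fun s => Finsupp.single s (1:ℕ)).sum = a := by
    intro a
    refine Finsupp.induction a ⟨[], rfl⟩ ?_
    rintro t b f - - ⟨l, hl⟩
    refine ⟨List.replicate b t ++ l, ?_⟩
    rw [List.map_append, List.sum_append, hrep, hl]
  have key : ∀ (s : S) (a : S →₀ ℕ),
      ν (Finsupp.single s d + a) = PiFin op (smGen op) d (fun _ => s) * ν a := by
    intro s a
    obtain ⟨l, hl⟩ := hex a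
    have h1 : ((List.replicate d s ++ l).map fun t => Finsupp.single t (1:ℕ)).sum
        = Finsupp.single s d + a := by
      rw [List.map_append, List.sum_append, hrep, hl]
    have h2 := hν (List.replicate d s ++ l)
    rw [h1] at h2
    have hlen : (List.replicate d s ++ l).length = d + l.length := by simp
    rw [h2, piFin_congr op (smGen op) hlen,
      piFin_split op (smGen op) s (hclass s) l.length _ (by
        intro i hi
        rw [List.get_eq_getElem, List.getElem_append_left (by simpa using hi)]
        simp),
      ← hl, hν l]
    congr 1
    apply congrArg
    funext j
    rw [List.get_eq_getElem, List.get_eq_getElem,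
      List.getElem_append_right (by simp)]
    congr 1
    simp
  have ν0 : ν 0 = 1 := by
    have := hν []
    simpa [PiFin] using this
  have νd : ∀ s : S, ν (Finsupp.single s d) = PiFin op (smGen op) d (fun _ => s) := by
    intro s
    have := key s 0
    rwa [add_zero, ν0, mul_one] at this
  have piFin_one : ∀ x : Fin 1 → S, PiFin op (smGen op) 1 x = smGen op (x 0) := by
    intro x
    rw [piFin_succ, piFin_zero, one_mul]
    rfl
  have νsingle : ∀ t : S, ν (Finsupp.single t 1) = smGen op t := by
    intro t
    have := hν [t]
    rw [show ((([t]).map fun s => Finsupp.single s (1:ℕ)).sum) = Finsupp.single t 1 by simp]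
      at this
    exact this.trans (piFin_one _)
  refine ⟨key, fun s t => ?_, fun s t => ?_⟩
  · rw [key s (Finsupp.single t 1), νsingle, νd]
  · have h1 := key s (Finsupp.single t d)
    have h2 := key t (Finsupp.single s d)
    rw [νd] at h1
    rw [νd] at h2
    rw [← h1, ← h2, add_comm]
end

section
/- Let (S,∘) be a finite RC-quasigroup, M its structure monoid, and Δ the right-lcm of S in M. Then for every d ≥ 2, Δ^{d−1} equals ν(Δ•^{d−1}) where Δ• is the product of all elements of S in ℕ^(S) and ν is the I-structure ν(s₁⋯s_q) = Π_q(s₁,…,s_q); moreover, if (S,∘) is of class d, then Δ^d lies in the centre of M: Δ^d·g = g·Δ^d for every g in M. -/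
/-!
The assignment `s ↦ (δ_s, (s∘-)⁻¹)` extends, thanks to the right-cyclic law, to a homomorphism
from `M` to `ℕ^(S) ⋊ Sym(S)` whose first component sends `Π_q(s₁,…,s_q)` to `s₁ + ⋯ + s_q`.
Since `ν` only depends on that multiset, `Π` is invariant under permutations of its arguments.
Hence every `s` left-divides `Π` of an enumeration of `S`, so `Δ` divides it; comparing first
components, in which `Δ` is everywhere at least `1`, forces equality. The expansion
`Π(wv) = Π(w)·Π(Ω_w(v))`, where `Ω_w` permutes `S`, then gives `Δ^k = ν(Δ•^k)`. If `(S,∘)` is of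
class `d`, `Ω` of a word in which every letter is repeated `d` times is trivial, so a generator
`t` can be moved across `Δ^d`, written as `Π` of such a word.
-/
namespace RCQuasigroup

open List

/-- `ℕ^(S) ⋊ Sym(S)`: a permutation acts on `S →₀ ℕ` by relabelling. -/
@[ext]
structure SemidirectPerm (S : Type*) where
  count : S →₀ ℕ
  perm : Equiv.Perm S

namespace SemidirectPerm

variable {S : Type*}

instance : One (SemidirectPerm S) := ⟨⟨0, 1⟩⟩

noncomputable instance : Mul (SemidirectPerm S) :=
  ⟨fun p q => ⟨p.count + Finsupp.domCongr p.perm q.count, p.perm * q.perm⟩⟩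

lemma one_def : (1 : SemidirectPerm S) = ⟨0, 1⟩ := rfl

lemma mul_def (p q : SemidirectPerm S) :
    p * q = ⟨p.count + Finsupp.domCongr p.perm q.count, p.perm * q.perm⟩ := rfl

noncomputable instance : Monoid (SemidirectPerm S) where
  mul_assoc p q r := by
    ext1
    · simp only [mul_def, map_add, add_assoc, Finsupp.domCongr_apply,
        ← Finsupp.equivMapDomain_trans]
      rfl
    · exact mul_assoc _ _ _
  one_mul p := by
    ext1
    · simp only [one_def, mul_def, zero_add, Finsupp.domCongr_apply]
      exact Finsupp.equivMapDomain_refl _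
    · exact one_mul _
  mul_one p := by
    ext1
    · simp only [one_def, mul_def, map_zero, add_zero]
    · exact mul_one _

end SemidirectPerm

variable {S : Type*} {op : S → S → S}

noncomputable def leftPerm (hlb : ∀ s : S, Function.Bijective (op s)) (s : S) : Equiv.Perm S :=
  Equiv.ofBijective (op s) (hlb s)

@[simp]
lemma leftPerm_inv_op (hlb : ∀ s : S, Function.Bijective (op s)) (s t : S) :
    (leftPerm hlb s)⁻¹ (op s t) = t :=
  (leftPerm hlb s).symm_apply_apply t

lemma leftPerm_op_mul_leftPerm (hRC : RCLaw op) (hlb : ∀ s : S, Function.Bijective (op s))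
    (s t : S) :
    leftPerm hlb (op s t) * leftPerm hlb s = leftPerm hlb (op t s) * leftPerm hlb t :=
  Equiv.ext (hRC s t)

noncomputable def toSemidirect (hRC : RCLaw op) (hlb : ∀ s : S, Function.Bijective (op s)) :
    StructureMonoid op →* SemidirectPerm S :=
  Con.lift _ (FreeMonoid.lift fun s => ⟨Finsupp.single s 1, (leftPerm hlb s)⁻¹⟩) <|
    Con.conGen_le.2 <| by
      rintro _ _ ⟨s, t, -, rfl, rfl⟩
      simp only [Con.ker_rel, map_mul, FreeMonoid.lift_eval_of, SemidirectPerm.mul_def,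
        Finsupp.domCongr_apply, Finsupp.equivMapDomain_single]
      ext1
      · rw [leftPerm_inv_op, leftPerm_inv_op, add_comm]
      · simp only [← mul_inv_rev, leftPerm_op_mul_leftPerm hRC]

section toSemidirect

variable (hRC : RCLaw op) (hlb : ∀ s : S, Function.Bijective (op s))

@[simp]
lemma toSemidirect_smGen (s : S) :
    toSemidirect hRC hlb (smGen op s) = ⟨Finsupp.single s 1, (leftPerm hlb s)⁻¹⟩ := rfl

lemma one_le_count_toSemidirect_of_smGen_dvd {g : StructureMonoid op} {s : S}
    (h : smGen op s ∣ g) : 1 ≤ (toSemidirect hRC hlb g).count s := by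
  obtain ⟨c, rfl⟩ := h
  simp [SemidirectPerm.mul_def]

lemma eq_one_of_count_toSemidirect_eq_zero {g : StructureMonoid op}
    (h : (toSemidirect hRC hlb g).count = 0) : g = 1 := by
  induction g using Con.induction_on with | _ w
  cases w using FreeMonoid.casesOn with
  | one => rfl
  | of_mul s w =>
    have := one_le_count_toSemidirect_of_smGen_dvd hRC hlb (dvd_mul_right (smGen op s) ↑w)
    rw [show smGen op s * ↑w = ↑(FreeMonoid.of s * w) from rfl, h] at this
    exact absurd this (by simp)

end toSemidirect

lemma commute_of_forall_commute_smGen {x : StructureMonoid op}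
    (h : ∀ s : S, Commute x (smGen op s)) (g : StructureMonoid op) : Commute x g := by
  induction g using Con.induction_on with | _ w
  induction w using FreeMonoid.inductionOn' with
  | one => exact Commute.one_right x
  | of_mul s w ih => exact (h s).mul_right ih

variable (op) in
/-- `rcOmega op r t = Ω_{|r|+1}(r.reverse, t)`; lists are read backwards so that the recursion
is on `cons`. -/
def rcOmega : List S → S → S
  | [], t => t
  | u :: r, t => op (rcOmega r u) (rcOmega r t)

variable (op) in
/-- `rcPi op r = Π_{|r|}(r.reverse)`. -/
def rcPi : List S → StructureMonoid op
  | [] => 1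
  | u :: r => rcPi r * smGen op (rcOmega op r u)

@[simp] lemma rcOmega_cons (u : S) (r : List S) (t : S) :
    rcOmega op (u :: r) t = op (rcOmega op r u) (rcOmega op r t) := rfl

@[simp] lemma rcPi_nil : rcPi op ([] : List S) = 1 := rfl

@[simp] lemma rcPi_cons (u : S) (r : List S) :
    rcPi op (u :: r) = rcPi op r * smGen op (rcOmega op r u) := rfl

lemma rcOmega_append (q r : List S) (t : S) :
    rcOmega op (q ++ r) t = rcOmega op (q.map (rcOmega op r)) (rcOmega op r t) := by
  induction q generalizing t with
  | nil => rfl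
  | cons u q ih => simp only [cons_append, rcOmega_cons, map_cons, ih]

lemma rcPi_append (q r : List S) :
    rcPi op (q ++ r) = rcPi op r * rcPi op (q.map (rcOmega op r)) := by
  induction q with
  | nil => simp
  | cons u q ih => simp only [cons_append, rcPi_cons, map_cons, ih, rcOmega_append, mul_assoc]

lemma rcPi_append_singleton (q : List S) (s : S) :
    rcPi op (q ++ [s]) = smGen op s * rcPi op (q.map (op s)) := by
  rw [rcPi_append, rcPi_cons, rcPi_nil, one_mul]
  rfl

lemma rcOmega_bijective (hlb : ∀ s : S, Function.Bijective (op s)) (r : List S) :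
    Function.Bijective (rcOmega op r) := by
  induction r with
  | nil => exact Function.bijective_id
  | cons u r ih => exact (hlb (rcOmega op r u)).comp ih

lemma toSemidirect_rcPi (hRC : RCLaw op) (hlb : ∀ s : S, Function.Bijective (op s))
    (r : List S) :
    (toSemidirect hRC hlb (rcPi op r)).count = (r.map fun s => Finsupp.single s 1).sum ∧
      ∀ t, (toSemidirect hRC hlb (rcPi op r)).perm (rcOmega op r t) = t := by
  induction r with
  | nil => exact ⟨rfl, fun _ => rfl⟩
  | cons u r ih =>
    simp only [rcPi_cons, map_mul, toSemidirect_smGen, SemidirectPerm.mul_def,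
      Finsupp.domCongr_apply, Finsupp.equivMapDomain_single, ih.1, ih.2, map_cons, sum_cons]
    exact ⟨add_comm _ _, fun t => (congrArg _ (leftPerm_inv_op hlb _ _)).trans (ih.2 t)⟩

lemma omegaFin_eq_rcOmega (n : ℕ) (x : Fin (n + 1) → S) :
    OmegaFin op n x = rcOmega op (ofFn fun i : Fin n => x i.castSucc).reverse (x (Fin.last n)) := by
  induction n with
  | zero => rfl
  | succ n ih =>
    rw [OmegaFin, ih, ih, ofFn_succ', concat_eq_append, reverse_append]
    have hlast : ∀ i : Fin n,
        (if ((i.castSucc : Fin (n + 1)) : ℕ) = n then x (Fin.last (n + 1))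
          else x i.castSucc.castSucc) = x i.castSucc.castSucc :=
      fun i => if_neg i.isLt.ne
    simp only [hlast, Fin.val_last, if_true]
    rfl

lemma piFin_succ {M : Type*} [Monoid M] (ι : S → M) (n : ℕ) (x : Fin (n + 1) → S) :
    PiFin op ι (n + 1) x = PiFin op ι n (fun i => x i.castSucc) * ι (OmegaFin op n x) := by
  simp only [PiFin, ← ofFn_eq_map, ofFn_succ', concat_eq_append, prod_append, prod_singleton]
  congr 2

lemma piFin_smGen_eq_rcPi (l : List S) :
    PiFin op (smGen op) l.length l.get = rcPi op l.reverse := by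
  suffices ∀ n (x : Fin n → S), PiFin op (smGen op) n x = rcPi op (ofFn x).reverse by
    rw [this, ofFn_get]
  intro n x
  induction n with
  | zero => rfl
  | succ n ih =>
    rw [piFin_succ, ih, omegaFin_eq_rcOmega, ofFn_succ' x, concat_eq_append, reverse_append]
    rfl

lemma rcOmega_replicate_of_omegaFin {d : ℕ}
    (hd : ∀ s t : S, OmegaFin op d (Fin.snoc (fun _ : Fin d => s) t) = t) (s : S) :
    rcOmega op (replicate d s) = id := by
  funext t
  simpa [omegaFin_eq_rcOmega] using hd s t

lemma rcOmega_flatMap_replicate {d : ℕ} (hd : ∀ s : S, rcOmega op (replicate d s) = id)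
    (l : List S) : rcOmega op (l.flatMap (replicate d)) = id := by
  induction l with
  | nil => rfl
  | cons s l ih =>
    funext t
    rw [flatMap_cons, rcOmega_append, ih, map_id, hd]
    rfl

lemma perm_univ_toList_map [Fintype S] {f : S → S} (hf : Function.Bijective f) {m : List S}
    (hm : m ~ Finset.univ.toList) : m.map f ~ Finset.univ.toList := by
  refine (perm_ext_iff_of_nodup ((hm.nodup_iff.2 (Finset.nodup_toList _)).map hf.1)
    (Finset.nodup_toList _)).2 fun a => ?_
  obtain ⟨b, rfl⟩ := hf.2 a
  simp [hm.mem_iff]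

lemma flatten_replicate_perm_flatMap_replicate {α : Type*} (k : ℕ) (l : List α) :
    (replicate k l).flatten ~ l.flatMap (replicate k) := by
  classical
  refine perm_iff_count.2 fun a => ?_
  rw [count_flatten, count_flatMap, map_replicate, sum_replicate, smul_eq_mul]
  induction l with
  | nil => rfl
  | cons b l ih => simp [count_cons, count_replicate, ih, mul_add, add_comm]

variable (op) in
def IsIStructure (ν : (S →₀ ℕ) → StructureMonoid op) : Prop :=
  ∀ l : List S, ν ((l.map fun s => Finsupp.single s 1).sum) = PiFin op (smGen op) l.length l.get

section IStructure

variable {ν : (S →₀ ℕ) → StructureMonoid op}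

lemma rcPi_eq_apply_sum_single (hν : IsIStructure op ν) (l : List S) :
    rcPi op l = ν ((l.map fun s => Finsupp.single s 1).sum) := by
  rw [← (reverse_perm l).map _ |>.sum_eq, hν, piFin_smGen_eq_rcPi, reverse_reverse]

/-- `ν` only sees the multiset of letters, so `Π` is invariant under permutations. -/
lemma rcPi_perm (hν : IsIStructure op ν) {r r' : List S} (h : r ~ r') :
    rcPi op r = rcPi op r' := by
  rw [rcPi_eq_apply_sum_single hν, rcPi_eq_apply_sum_single hν, (h.map _).sum_eq]

lemma smGen_dvd_rcPi (hν : IsIStructure op ν) {r : List S} {s : S} (hs : s ∈ r) :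
    smGen op s ∣ rcPi op r := by
  classical
  rw [rcPi_perm hν ((perm_cons_erase hs).trans (perm_append_singleton s _).symm),
    rcPi_append_singleton]
  exact dvd_mul_right _ _

variable [Fintype S]

lemma eq_rcPi_univ_of_isRightLcm (hRC : RCLaw op) (hlb : ∀ s : S, Function.Bijective (op s))
    (hν : IsIStructure op ν) {Δ : StructureMonoid op}
    (hΔ : (∀ s : S, smGen op s ∣ Δ) ∧ ∀ k, (∀ s : S, smGen op s ∣ k) → Δ ∣ k) :
    Δ = rcPi op Finset.univ.toList := by
  obtain ⟨c, hc⟩ := hΔ.2 _ fun s => smGen_dvd_rcPi hν (Finset.mem_toList.2 (Finset.mem_univ s))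
  suffices c = 1 by rw [hc, this, mul_one]
  apply eq_one_of_count_toSemidirect_eq_zero hRC hlb
  have hcount := congrArg (fun g => (toSemidirect hRC hlb g).count) hc
  simp only [(toSemidirect_rcPi hRC hlb _).1, map_mul, SemidirectPerm.mul_def] at hcount
  ext s
  set σ := (toSemidirect hRC hlb Δ).perm
  have hcount_s := congrArg (· (σ s)) hcount
  simp only [Finset.sum_map_toList, Finsupp.coe_finsetSum, Finset.sum_apply,
    Finsupp.univ_sum_single_apply', Finsupp.domCongr_apply, Finsupp.coe_add, Pi.add_apply,
    Finsupp.equivMapDomain_apply, Equiv.symm_apply_apply] at hcount_s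
  have hΔ_pos := one_le_count_toSemidirect_of_smGen_dvd hRC hlb (hΔ.1 (σ s))
  rw [Finsupp.coe_zero, Pi.zero_apply]
  omega

lemma rcPi_flatten_replicate (hlb : ∀ s : S, Function.Bijective (op s)) (hν : IsIStructure op ν)
    (k : ℕ) {m : List S} (hm : m ~ Finset.univ.toList) :
    rcPi op (replicate k m).flatten = rcPi op Finset.univ.toList ^ k := by
  induction k generalizing m with
  | zero => exact (pow_zero _).symm
  | succ k ih =>
    rw [replicate_succ', flatten_append, flatten_singleton, rcPi_append, map_flatten,
      map_replicate, ih (perm_univ_toList_map (rcOmega_bijective hlb m) hm), rcPi_perm hν hm,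
      pow_succ']

/-- Writing `Δ^d` as `Π` of the word in which each letter of `S` is repeated `d` times, the
class-`d` law makes `Ω` of that word the identity, so a generator `t` can be moved across it. -/
lemma commute_rcPi_univ_pow_smGen (hlb : ∀ s : S, Function.Bijective (op s))
    (hν : IsIStructure op ν) {d : ℕ} (hd : ∀ s : S, rcOmega op (replicate d s) = id) (t : S) :
    Commute (rcPi op Finset.univ.toList ^ d) (smGen op t) := by
  set q := (Finset.univ : Finset S).toList.flatMap (replicate d)
  have hpow : rcPi op Finset.univ.toList ^ d = rcPi op q := by
    rw [← rcPi_flatten_replicate hlb hν d (Perm.refl _),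
      rcPi_perm hν (flatten_replicate_perm_flatMap_replicate d _)]
  have hmap : rcPi op (q.map (op t)) = rcPi op q := by
    have hq : q.map (op t) = (Finset.univ.toList.map (op t)).flatMap (replicate d) := by
      simp [q, map_flatMap, flatMap_map]
    rw [hq]
    exact rcPi_perm hν ((perm_univ_toList_map (hlb t) (Perm.refl _)).flatMap_right _)
  calc rcPi op Finset.univ.toList ^ d * smGen op t
      = rcPi op (t :: q) := by rw [hpow, rcPi_cons, rcOmega_flatMap_replicate hd]; rfl
    _ = rcPi op (q ++ [t]) := rcPi_perm hν (perm_append_singleton t q).symm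
    _ = smGen op t * rcPi op Finset.univ.toList ^ d := by rw [rcPi_append_singleton, hmap, hpow]

end IStructure

end RCQuasigroup

open RCQuasigroup

/-- Let `(S,∘)` be a finite RC-quasigroup, `M` its structure monoid, `Δ`
the right-lcm of `S` in `M`, `Δ•` the product of all elements of `S` in `ℕ^(S)`, and `ν` the
`I`-structure `ν(s₁⋯s_q) = Π_q(s₁,…,s_q)`. Then `Δ^{d−1} = ν(Δ•^{d−1})` for every `d ≥ 2`,
and if `(S,∘)` is of class `d` then `Δ^d` is central in `M`. -/
theorem statement17 {S : Type*} [Fintype S] (op : S → S → S)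
    (hRC : RCLaw op) (hlb : ∀ s : S, Function.Bijective (op s))
    (ν : (S →₀ ℕ) → StructureMonoid op)
    (hν : ∀ l : List S,
      ν ((l.map fun s => Finsupp.single s 1).sum) = PiFin op (smGen op) l.length l.get)
    (Δ : StructureMonoid op)
    (hΔ : (∀ s : S, smGen op s ∣ Δ) ∧ ∀ k, (∀ s : S, smGen op s ∣ k) → Δ ∣ k) :
    (∀ d : ℕ, 2 ≤ d → Δ ^ (d - 1) = ν ((d - 1) • ∑ s : S, Finsupp.single s 1)) ∧
    (∀ d : ℕ, (∀ s t : S, OmegaFin op d (Fin.snoc (fun _ : Fin d => s) t) = t) →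
      ∀ g : StructureMonoid op, Δ ^ d * g = g * Δ ^ d) := by
  rw [eq_rcPi_univ_of_isRightLcm hRC hlb hν hΔ]
  refine ⟨fun d _ => ?_, fun d hd => ?_⟩
  · rw [← rcPi_flatten_replicate hlb hν (d - 1) (List.Perm.refl _), rcPi_eq_apply_sum_single hν,
      List.map_flatten, List.map_replicate, List.sum_flatten, List.map_replicate,
      List.sum_replicate, Finset.sum_map_toList]
  · exact commute_of_forall_commute_smGen
      (commute_rcPi_univ_pow_smGen hlb hν (rcOmega_replicate_of_omegaFin hd))
end
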